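/- arXiv:2008.09294 — 3 statements merged into one kernel-verified Lean document; each statement's English description precedes it below -/
import Mathlib

section
/- Let G be an edge-colored complete graph containing no monochromatic triangle and no properly colored quadrangle through a fixed vertex v. Partition V(G)∖{v} into color classes V_1,…,V_k according to the color of the edge to v (k ≥ 2 classes), ordered by size. Then every class other than a largest one has size exactly 1; i.e., at most one class has size greater than 1. -/
/-- An edge-colored graph (with total symmetric coloring `col`) contains a
monochromatic triangle. -/
def HasMonoTriangle {V : Type*} (col : V → V → ℕ) : Prop :=
  ∃ x y z : V, x ≠ y ∧ y ≠ z ∧ x ≠ z ∧ col x y = col y z ∧ col x y = col x z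

/-- `c : ZMod ℓ → V` is a properly colored cycle of length `ℓ` in the
edge-colored complete graph with coloring `col`. -/
def IsPCCycle {V : Type*} {ℓ : ℕ} (col : V → V → ℕ) (c : ZMod ℓ → V) : Prop :=
  Function.Injective c ∧
    ∀ i : ZMod ℓ, col (c i) (c (i + 1)) ≠ col (c (i + 1)) (c (i + 2))

/-- There is a properly colored cycle of length `ℓ` through `v`. -/
def PCThrough {V : Type*} (col : V → V → ℕ) (ℓ : ℕ) (v : V) : Prop :=
  ∃ c : ZMod ℓ → V, IsPCCycle col c ∧ ∃ i, c i = v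

/-- `S` is a degenerate set of the edge-colored complete graph `col`. -/
def DegenSet {V : Type*} (col : V → V → ℕ) (S : Set V) : Prop :=
  S.Nonempty ∧ ∃ f : V → ℕ,
    (∀ u ∈ S, ∀ v ∈ S, u ≠ v → col u v = f u ∨ col u v = f v) ∧
    (∀ u ∈ S, ∀ v, v ∉ S → col u v = f u)

/-!
Take `x ≠ x'` with `col v x = col v x' = a` and `y ≠ y'` with `col v y = col v y' = b`.
Neither `x x'` nor `y y'` can repeat the colour joining it to `v`, so the quadrangles
`v x' x y` and `v y' y x` are properly coloured unless `col x y` equals `col x x'` or `b`,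
and `col y y'` or `a`, respectively; together this forces `col x y = col x x'`.
By symmetry also `col x' y = col x x'`, and `x x' y` is a monochromatic triangle.
-/

section

variable {V : Type*} {col : V → V → ℕ}

lemma pcThrough_four_of_ne {p q r s : V}
    (hpq : p ≠ q) (hpr : p ≠ r) (hps : p ≠ s) (hqr : q ≠ r) (hqs : q ≠ s) (hrs : r ≠ s)
    (h0 : col p q ≠ col q r) (h1 : col q r ≠ col r s)
    (h2 : col r s ≠ col s p) (h3 : col s p ≠ col p q) :
    PCThrough col 4 p := by
  refine ⟨fun i => ![p, q, r, s] i, ⟨?_, ?_⟩, 0, rfl⟩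
  · intro i j hij
    fin_cases i <;> fin_cases j <;> simp_all <;> rfl
  · intro i
    fin_cases i <;> simp_all <;> tauto

lemma col_ne_of_not_hasMonoTriangle (hmono : ¬ HasMonoTriangle col) {u x y : V} {c : ℕ}
    (hux : u ≠ x) (huy : u ≠ y) (hxy : x ≠ y) (hx : col u x = c) (hy : col u y = c) :
    col x y ≠ c := fun h =>
  hmono ⟨u, x, y, hux, hxy, huy, by rw [hx, h], by rw [hx, hy]⟩

lemma col_eq_or_col_eq_of_not_pcThrough (hsym : ∀ u w, col u w = col w u) {v p q r : V}
    (hnoquad : ¬ PCThrough col 4 v)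
    (hvp : v ≠ p) (hvq : v ≠ q) (hvr : v ≠ r) (hpq : p ≠ q) (hpr : p ≠ r) (hqr : q ≠ r)
    (hp : col v p ≠ col p q) (hr : col v r ≠ col v p) :
    col p q = col q r ∨ col q r = col v r := by
  by_contra! h
  exact hnoquad <| pcThrough_four_of_ne hvp hvq hvr hpq hpr hqr hp h.1
    (by rw [hsym r v]; exact h.2) (by rw [hsym r v]; exact hr)

lemma col_eq_of_not_pcThrough_of_not_hasMonoTriangle (hsym : ∀ u w, col u w = col w u)
    (hmono : ¬ HasMonoTriangle col) {v : V} (hnoquad : ¬ PCThrough col 4 v)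
    {a b : ℕ} (hab : a ≠ b) {x x' y y' : V}
    (hxv : x ≠ v) (hx'v : x' ≠ v) (hyv : y ≠ v) (hy'v : y' ≠ v)
    (hxa : col v x = a) (hx'a : col v x' = a) (hyb : col v y = b) (hy'b : col v y' = b)
    (hxx' : x ≠ x') (hyy' : y ≠ y') :
    col x y = col x x' := by
  have hxy : x ≠ y := fun h => hab (hxa ▸ hyb ▸ congrArg (col v) h)
  have hx'y : x' ≠ y := fun h => hab (hx'a ▸ hyb ▸ congrArg (col v) h)
  have hxy' : x ≠ y' := fun h => hab (hxa ▸ hy'b ▸ congrArg (col v) h)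
  have hx'x : col x' x ≠ a :=
    col_ne_of_not_hasMonoTriangle hmono hx'v.symm hxv.symm hxx'.symm hx'a hxa
  have hy'y : col y' y ≠ b :=
    col_ne_of_not_hasMonoTriangle hmono hy'v.symm hyv.symm hyy'.symm hy'b hyb
  have quad_x := col_eq_or_col_eq_of_not_pcThrough hsym hnoquad hx'v.symm hxv.symm hyv.symm
    hxx'.symm hx'y hxy (by rw [hx'a]; exact hx'x.symm) (by rw [hyb, hx'a]; exact hab.symm)
  have quad_y := col_eq_or_col_eq_of_not_pcThrough hsym hnoquad hy'v.symm hyv.symm hxv.symm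
    hyy'.symm hxy'.symm hxy.symm (by rw [hy'b]; exact hy'y.symm) (by rw [hxa, hy'b]; exact hab)
  rw [hyb, hsym x' x] at quad_x
  rw [hxa, hsym y x] at quad_y
  rcases quad_x with h | h
  · exact h.symm
  · rcases quad_y with h' | h'
    · exact absurd (h'.trans h) hy'y
    · exact absurd (h.symm.trans h') hab.symm

end

/-- If no PC quadrangle passes through $v$ and there is no monochromatic
triangle, then at most one color class of the neighborhood of $v$ has more
than one vertex. -/
theorem at_most_one_large_color_class
    {V : Type*} [Fintype V] [DecidableEq V] (col : V → V → ℕ)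
    (hsym : ∀ u v, col u v = col v u)
    (hmono : ¬ HasMonoTriangle col)
    (v : V) (hnoquad : ¬ PCThrough col 4 v)
    (a b : ℕ) (hab : a ≠ b) :
    ¬ (2 ≤ (Finset.univ.filter fun u => u ≠ v ∧ col v u = a).card ∧
       2 ≤ (Finset.univ.filter fun u => u ≠ v ∧ col v u = b).card) := by
  rintro ⟨ha, hb⟩
  obtain ⟨x, hx, x', hx', hxx'⟩ := Finset.one_lt_card.mp ha
  obtain ⟨y, hy, y', hy', hyy'⟩ := Finset.one_lt_card.mp hb
  simp only [Finset.mem_filter, Finset.mem_univ, true_and] at hx hx' hy hy'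
  have hxy : col x y = col x x' :=
    col_eq_of_not_pcThrough_of_not_hasMonoTriangle hsym hmono hnoquad hab
      hx.1 hx'.1 hy.1 hy'.1 hx.2 hx'.2 hy.2 hy'.2 hxx' hyy'
  have hx'y : col x' y = col x' x :=
    col_eq_of_not_pcThrough_of_not_hasMonoTriangle hsym hmono hnoquad hab
      hx'.1 hx.1 hy.1 hy'.1 hx'.2 hx.2 hy.2 hy'.2 hxx'.symm hyy'
  have hx'_ne_y : x' ≠ y := fun h => hab (hx'.2 ▸ hy.2 ▸ congrArg (col v) h)
  have hx_ne_y : x ≠ y := fun h => hab (hx.2 ▸ hy.2 ▸ congrArg (col v) h)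
  exact hmono ⟨x, x', y, hxx', hx'_ne_y, hx_ne_y, by rw [hx'y, hsym x' x], hxy.symm⟩
end

section
/- Let G be an edge-colored complete graph with a vertex v such that no properly colored quadrangle contains v and G has no monochromatic triangle. Then for any four distinct vertices x, y, z, w in G − v with col(v,{x,y}) ∩ col(v,{z,w}) = ∅, either col(xy) ∈ col(v,{x,y}) or col(zw) ∈ col(v,{z,w}). -/
/-!
If both alternatives fail, none of the quadrangles `vyxzv`, `vwzxv`, `vyxwv`, `vzwxv` may be
properly colored. Their edges at `v` already differ in color from their neighbours, so in each
one a middle edge repeats a color; the disjointness of the colors at `v` then leaves only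
`col xy = col xz = col zw = col xw`, and `xzw` is a monochromatic triangle.
-/

theorem pcThrough_four_of_ne_s17 {V : Type*} (col : V → V → ℕ) {v a b c : V}
    (hva : a ≠ v) (hvb : b ≠ v) (hvc : c ≠ v) (hab : a ≠ b) (hac : a ≠ c) (hbc : b ≠ c)
    (h₁ : col v a ≠ col a b) (h₂ : col a b ≠ col b c) (h₃ : col b c ≠ col c v)
    (h₄ : col c v ≠ col v a) :
    PCThrough col 4 v := by
  refine ⟨![v, a, b, c], ⟨?_, ?_⟩, 0, rfl⟩
  · intro i j hij
    fin_cases i <;> fin_cases j <;> simp_all <;> rfl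
  · intro i
    fin_cases i
    exacts [h₁, h₂, h₃, h₄]

theorem eq_or_eq_of_not_pcThrough_four {V : Type*} (col : V → V → ℕ)
    (hsym : ∀ u v, col u v = col v u) {v a b c : V} (hq : ¬ PCThrough col 4 v)
    (hva : a ≠ v) (hvb : b ≠ v) (hvc : c ≠ v) (hab : a ≠ b) (hac : a ≠ c) (hbc : b ≠ c)
    (h₁ : col v a ≠ col a b) (h₄ : col v a ≠ col v c) :
    col a b = col b c ∨ col b c = col v c := by
  by_contra! h
  rw [hsym v c] at h h₄
  exact hq (pcThrough_four_of_ne_s17 col hva hvb hvc hab hac hbc h₁ h.1 h.2 h₄.symm)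

theorem col_eq_of_not_pcThrough_four {V : Type*} (col : V → V → ℕ)
    (hsym : ∀ u v, col u v = col v u) {v x y z w : V} (hq : ¬ PCThrough col 4 v)
    (hxy : x ≠ y) (hxz : x ≠ z) (hxw : x ≠ w) (hyz : y ≠ z) (hzw : z ≠ w)
    (hvx : x ≠ v) (hvy : y ≠ v) (hvz : z ≠ v) (hvw : w ≠ v)
    (hxz_v : col v x ≠ col v z) (hxw_v : col v x ≠ col v w) (hyz_v : col v y ≠ col v z)
    (hxy_x : col x y ≠ col v x) (hxy_y : col x y ≠ col v y)
    (hzw_z : col z w ≠ col v z) (hzw_w : col z w ≠ col v w) :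
    col x z = col x y ∧ col z w = col x y := by
  have hyxz : col x y = col x z ∨ col x z = col v z := by
    have := eq_or_eq_of_not_pcThrough_four col hsym hq hvy hvx hvz hxy.symm hyz hxz
      (by rw [hsym y x]; exact hxy_y.symm) hyz_v
    rwa [hsym y x] at this
  have hwzx : col z w = col x z ∨ col x z = col v x := by
    have := eq_or_eq_of_not_pcThrough_four col hsym hq hvw hvz hvx hzw.symm hxw.symm hxz.symm
      (by rw [hsym w z]; exact hzw_w.symm) hxw_v.symm
    rwa [hsym w z, hsym z x] at this
  rcases hyxz with h₁ | h₁ <;> rcases hwzx with h₂ | h₂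
  · exact ⟨h₁.symm, h₂.trans h₁.symm⟩
  · exact absurd (h₁.trans h₂) hxy_x
  · exact absurd (h₂.trans h₁) hzw_z
  · exact absurd (h₂.symm.trans h₁) hxz_v

/-- Claim: if no PC quadrangle passes through $v$ and there is no
monochromatic triangle, then for distinct $x,y,z,w ≠ v$ with disjoint color
sets towards $v$, either $col(xy)$ is a color of $v$ towards $\{x,y\}$ or
$col(zw)$ is a color of $v$ towards $\{z,w\}$. -/
theorem quad_free_color_claim
    {V : Type*} (col : V → V → ℕ)
    (hsym : ∀ u v, col u v = col v u)
    (hmono : ¬ HasMonoTriangle col)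
    (v : V) (hnoquad : ¬ PCThrough col 4 v)
    (x y z w : V)
    (hxy : x ≠ y) (hxz : x ≠ z) (hxw : x ≠ w) (hyz : y ≠ z) (hyw : y ≠ w)
    (hzw : z ≠ w) (hvx : x ≠ v) (hvy : y ≠ v) (hvz : z ≠ v) (hvw : w ≠ v)
    (hdisj1 : col v x ≠ col v z) (hdisj2 : col v x ≠ col v w)
    (hdisj3 : col v y ≠ col v z) (hdisj4 : col v y ≠ col v w) :
    (col x y = col v x ∨ col x y = col v y) ∨
    (col z w = col v z ∨ col z w = col v w) := by
  by_contra! h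
  obtain ⟨⟨hxy_x, hxy_y⟩, hzw_z, hzw_w⟩ := h
  obtain ⟨hxz_c, hzw_c⟩ := col_eq_of_not_pcThrough_four col hsym hnoquad hxy hxz hxw hyz hzw
    hvx hvy hvz hvw hdisj1 hdisj2 hdisj3 hxy_x hxy_y hzw_z hzw_w
  obtain ⟨hxw_c, -⟩ := col_eq_of_not_pcThrough_four col hsym hnoquad hxy hxw hxz hyw hzw.symm
    hvx hvy hvw hvz hdisj2 hdisj1 hdisj4 hxy_x hxy_y (by rwa [hsym w z]) (by rwa [hsym w z])
  exact hmono ⟨x, z, w, hxz, hzw, hxw, hxz_c.trans hzw_c.symm, hxz_c.trans hxw_c.symm⟩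
end

section
/- There is no edge-colored complete graph K_n with n ≥ 6 that contains no monochromatic triangle, is non-degenerate, and in which some vertex lies on a properly colored 4-cycle but on no properly colored 5-cycle. Equivalently: in a non-degenerate edge-colored K_n (n ≥ 6) with no monochromatic triangle, every vertex lying on a PC quadrangle also lies on a PC pentagon. -/
/-!
Let `v₁v₂v₃v₄` be a PC quadrangle with no PC pentagon through `v₁`. Inserting an outside vertex
`x` into the quadrangle in all possible ways, the absence of PC pentagons and of monochromatic
triangles forces `x` to see each `vᵢ` in the colour of `vᵢvᵢ₊₁` (forward), or each `vᵢ` in the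
colour of `vᵢ₋₁vᵢ` (backward), or all `vᵢ` in one colour. Further pentagons show that forward and
backward vertices cannot coexist, that the vertices of the third kind form a degenerate set, and
that if all outside vertices are forward (and there are at least two of them, as `n ≥ 6`) the
quadrangle itself is degenerate with `f vᵢ = col vᵢ vᵢ₊₁`.
-/

variable {V : Type*} {col : V → V → ℕ}

lemma consecutive_eq_of_not_pcThrough_five {v : V} (hv : ¬ PCThrough col 5 v) (x₁ x₂ x₃ x₄ : V)
    (hd : [v, x₁, x₂, x₃, x₄].Nodup) :
    col v x₁ = col x₁ x₂ ∨ col x₁ x₂ = col x₂ x₃ ∨ col x₂ x₃ = col x₃ x₄ ∨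
      col x₃ x₄ = col x₄ v ∨ col x₄ v = col v x₁ := by
  by_contra! ⟨h₀, h₁, h₂, h₃, h₄⟩
  refine hv ⟨![v, x₁, x₂, x₃, x₄], ⟨?_, fun i => ?_⟩, 0, rfl⟩
  · simp only [List.nodup_cons, List.mem_cons, List.not_mem_nil] at hd
    intro a b hab
    fin_cases a <;> fin_cases b <;> first | rfl | simp_all
  · fin_cases i <;> assumption

lemma not_col_eq_and_col_eq_of_not_hasMonoTriangle (h : ¬ HasMonoTriangle col) (x y z : V)
    (hd : [x, y, z].Nodup) : ¬ (col x y = col y z ∧ col x y = col x z) := by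
  simp only [List.nodup_cons, List.mem_cons, List.not_mem_nil] at hd
  exact fun ⟨hxy, hxz⟩ => h ⟨x, y, z, by grind, by grind, by grind, hxy, hxz⟩

structure IsPCQuadrangle (col : V → V → ℕ) (v₁ v₂ v₃ v₄ : V) : Prop where
  ne₁₂ : v₁ ≠ v₂
  ne₁₃ : v₁ ≠ v₃
  ne₁₄ : v₁ ≠ v₄
  ne₂₃ : v₂ ≠ v₃
  ne₂₄ : v₂ ≠ v₄
  ne₃₄ : v₃ ≠ v₄
  col₁ : col v₁ v₂ ≠ col v₂ v₃
  col₂ : col v₂ v₃ ≠ col v₃ v₄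
  col₃ : col v₃ v₄ ≠ col v₄ v₁
  col₄ : col v₄ v₁ ≠ col v₁ v₂

lemma IsPCCycle.comp_add_left {ℓ : ℕ} {c : ZMod ℓ → V} (h : IsPCCycle col c) (i : ZMod ℓ) :
    IsPCCycle col (fun j => c (i + j)) :=
  ⟨h.1.comp (add_right_injective i), fun j => by simpa only [add_assoc] using h.2 (i + j)⟩

lemma PCThrough.exists_apply_zero_eq {ℓ : ℕ} {v : V} (h : PCThrough col ℓ v) :
    ∃ c : ZMod ℓ → V, IsPCCycle col c ∧ c 0 = v := by
  obtain ⟨c, hc, i, rfl⟩ := h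
  exact ⟨_, hc.comp_add_left i, by rw [add_zero]⟩

lemma exists_isPCQuadrangle_of_pcThrough_four {v : V} (h : PCThrough col 4 v) :
    ∃ v₂ v₃ v₄, IsPCQuadrangle col v v₂ v₃ v₄ := by
  obtain ⟨c, ⟨hinj, hpc⟩, rfl⟩ := h.exists_apply_zero_eq
  exact ⟨c 1, c 2, c 3, hinj.ne (by decide), hinj.ne (by decide), hinj.ne (by decide),
    hinj.ne (by decide), hinj.ne (by decide), hinj.ne (by decide), hpc 0, hpc 1, hpc 2, hpc 3⟩

structure QuadrangleWithoutPentagon (col : V → V → ℕ) (v₁ v₂ v₃ v₄ : V) : Prop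
    extends IsPCQuadrangle col v₁ v₂ v₃ v₄ where
  symm : ∀ u v, col u v = col v u
  not_hasMonoTriangle : ¬ HasMonoTriangle col
  not_pcThrough_five : ¬ PCThrough col 5 v₁

/-- `SeesForward col v₁ v₄ v₃ v₂ x` is the backward pattern `col vᵢ x = col vᵢ₋₁ vᵢ`. -/
def SeesForward (col : V → V → ℕ) (v₁ v₂ v₃ v₄ x : V) : Prop :=
  col v₁ x = col v₁ v₂ ∧ col v₂ x = col v₂ v₃ ∧ col v₃ x = col v₃ v₄ ∧ col v₄ x = col v₄ v₁

def SeesMonochromatic (col : V → V → ℕ) (v₁ v₂ v₃ v₄ x : V) : Prop :=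
  col v₂ x = col v₁ x ∧ col v₃ x = col v₁ x ∧ col v₄ x = col v₁ x

lemma exists_pair_notMem_of_six_le_card [Fintype V] [DecidableEq V] (hV : 6 ≤ Fintype.card V)
    (a b c d : V) : ∃ u ∉ ({a, b, c, d} : Set V), ∃ w ∉ ({a, b, c, d} : Set V), u ≠ w := by
  have hcard : 1 < (({a, b, c, d} : Finset V)ᶜ).card := by
    have := Finset.card_le_four (a := a) (b := b) (c := c) (d := d)
    rw [Finset.card_compl]
    omega
  obtain ⟨u, hu, w, hw, huw⟩ := Finset.one_lt_card.1 hcard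
  exact ⟨u, by simpa using hu, w, by simpa using hw, huw⟩

lemma quadrangle_set_reverse (a b c d : V) : ({a, d, c, b} : Set V) = {a, b, c, d} := by
  ext
  simp only [Set.mem_insert_iff, Set.mem_singleton_iff]
  tauto

namespace QuadrangleWithoutPentagon

variable {v₁ v₂ v₃ v₄ u w : V}

lemma reverse (h : QuadrangleWithoutPentagon col v₁ v₂ v₃ v₄) :
    QuadrangleWithoutPentagon col v₁ v₄ v₃ v₂ := by
  obtain ⟨⟨_, _, _, _, _, _, _, _, _, _⟩, hsym, hmono, hv⟩ := h
  refine ⟨⟨?_, ?_, ?_, ?_, ?_, ?_, ?_, ?_, ?_, ?_⟩, hsym, hmono, hv⟩ <;> grind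

lemma seesForward_or_seesBackward_or_seesMonochromatic
    (h : QuadrangleWithoutPentagon col v₁ v₂ v₃ v₄) (hu : u ∉ ({v₁, v₂, v₃, v₄} : Set V)) :
    SeesForward col v₁ v₂ v₃ v₄ u ∨ SeesForward col v₁ v₄ v₃ v₂ u ∨
      SeesMonochromatic col v₁ v₂ v₃ v₄ u := by
  obtain ⟨⟨_, _, _, _, _, _, _, _, _, _⟩, hsym, hmono, hv⟩ := h
  simp only [Set.mem_insert_iff, Set.mem_singleton_iff, not_or] at hu
  have := consecutive_eq_of_not_pcThrough_five hv v₂ v₃ v₄ u (by grind)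
  have := consecutive_eq_of_not_pcThrough_five hv v₂ v₃ u v₄ (by grind)
  have := consecutive_eq_of_not_pcThrough_five hv v₂ u v₃ v₄ (by grind)
  have := consecutive_eq_of_not_pcThrough_five hv v₄ v₃ v₂ u (by grind)
  have := not_col_eq_and_col_eq_of_not_hasMonoTriangle hmono v₁ v₂ u (by grind)
  have := not_col_eq_and_col_eq_of_not_hasMonoTriangle hmono v₁ v₄ u (by grind)
  have := not_col_eq_and_col_eq_of_not_hasMonoTriangle hmono v₂ v₃ u (by grind)
  have := not_col_eq_and_col_eq_of_not_hasMonoTriangle hmono v₃ v₄ u (by grind)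
  grind (splits := 40) [SeesForward, SeesMonochromatic]

lemma not_seesForward_and_seesBackward (h : QuadrangleWithoutPentagon col v₁ v₂ v₃ v₄)
    (hu : u ∉ ({v₁, v₂, v₃, v₄} : Set V)) (hw : w ∉ ({v₁, v₂, v₃, v₄} : Set V)) :
    ¬ (SeesForward col v₁ v₂ v₃ v₄ u ∧ SeesForward col v₁ v₄ v₃ v₂ w) := by
  obtain ⟨⟨_, _, _, _, _, _, _, _, _, _⟩, hsym, hmono, hv⟩ := h
  simp only [Set.mem_insert_iff, Set.mem_singleton_iff, not_or] at hu hw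
  rintro ⟨hfu, hbw⟩
  obtain rfl | huw := eq_or_ne u w
  · grind [SeesForward]
  have := consecutive_eq_of_not_pcThrough_five hv v₃ w v₄ u (by grind)
  have := consecutive_eq_of_not_pcThrough_five hv v₄ w v₃ u (by grind)
  have := consecutive_eq_of_not_pcThrough_five hv u v₄ v₃ w (by grind)
  have := not_col_eq_and_col_eq_of_not_hasMonoTriangle hmono v₁ v₃ u (by grind)
  have := not_col_eq_and_col_eq_of_not_hasMonoTriangle hmono v₁ v₃ w (by grind)
  grind (splits := 40) [SeesForward]

lemma col_eq_of_seesMonochromatic_of_seesForward (h : QuadrangleWithoutPentagon col v₁ v₂ v₃ v₄)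
    (hu : u ∉ ({v₁, v₂, v₃, v₄} : Set V)) (hw : w ∉ ({v₁, v₂, v₃, v₄} : Set V))
    (hmu : SeesMonochromatic col v₁ v₂ v₃ v₄ u) (hfw : SeesForward col v₁ v₂ v₃ v₄ w) :
    col u w = col v₁ u := by
  obtain ⟨⟨_, _, _, _, _, _, _, _, _, _⟩, hsym, hmono, hv⟩ := h
  simp only [Set.mem_insert_iff, Set.mem_singleton_iff, not_or] at hu hw
  obtain rfl | huw := eq_or_ne u w
  · grind [SeesForward, SeesMonochromatic]
  have := consecutive_eq_of_not_pcThrough_five hv v₂ w u v₄ (by grind)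
  have := consecutive_eq_of_not_pcThrough_five hv v₄ v₃ u w (by grind)
  have := not_col_eq_and_col_eq_of_not_hasMonoTriangle hmono v₁ v₄ u (by grind)
  have := not_col_eq_and_col_eq_of_not_hasMonoTriangle hmono v₃ v₄ u (by grind)
  grind (splits := 40) [SeesForward, SeesMonochromatic]

lemma col_eq_or_col_eq_of_seesMonochromatic (h : QuadrangleWithoutPentagon col v₁ v₂ v₃ v₄)
    (hu : u ∉ ({v₁, v₂, v₃, v₄} : Set V)) (hw : w ∉ ({v₁, v₂, v₃, v₄} : Set V)) (huw : u ≠ w)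
    (hmu : SeesMonochromatic col v₁ v₂ v₃ v₄ u) (hmw : SeesMonochromatic col v₁ v₂ v₃ v₄ w) :
    col u w = col v₁ u ∨ col u w = col v₁ w := by
  obtain ⟨⟨_, _, _, _, _, _, _, _, _, _⟩, hsym, hmono, hv⟩ := h
  simp only [Set.mem_insert_iff, Set.mem_singleton_iff, not_or] at hu hw
  have := consecutive_eq_of_not_pcThrough_five hv v₄ v₃ w u (by grind)
  have := not_col_eq_and_col_eq_of_not_hasMonoTriangle hmono v₁ v₄ u (by grind)
  have := not_col_eq_and_col_eq_of_not_hasMonoTriangle hmono v₃ v₄ w (by grind)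
  grind (splits := 40) [SeesMonochromatic]

lemma diagonals_of_seesForward (h : QuadrangleWithoutPentagon col v₁ v₂ v₃ v₄)
    (hu : u ∉ ({v₁, v₂, v₃, v₄} : Set V)) (hw : w ∉ ({v₁, v₂, v₃, v₄} : Set V)) (huw : u ≠ w)
    (hfu : SeesForward col v₁ v₂ v₃ v₄ u) (hfw : SeesForward col v₁ v₂ v₃ v₄ w) :
    (col v₁ v₃ = col v₁ v₂ ∨ col v₁ v₃ = col v₃ v₄) ∧
      (col v₂ v₄ = col v₂ v₃ ∨ col v₂ v₄ = col v₄ v₁) := by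
  obtain ⟨⟨_, _, _, _, _, _, _, _, _, _⟩, hsym, hmono, hv⟩ := h
  simp only [Set.mem_insert_iff, Set.mem_singleton_iff, not_or] at hu hw
  have := consecutive_eq_of_not_pcThrough_five hv v₄ v₂ w u (by grind)
  have := consecutive_eq_of_not_pcThrough_five hv v₃ v₄ w u (by grind)
  have := not_col_eq_and_col_eq_of_not_hasMonoTriangle hmono v₁ u w (by grind)
  have := not_col_eq_and_col_eq_of_not_hasMonoTriangle hmono v₂ u w (by grind)
  have := not_col_eq_and_col_eq_of_not_hasMonoTriangle hmono v₄ u w (by grind)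
  grind (splits := 40) [SeesForward]

lemma seesMonochromatic_reverse_iff :
    SeesMonochromatic col v₁ v₄ v₃ v₂ u ↔ SeesMonochromatic col v₁ v₂ v₃ v₄ u := by
  unfold SeesMonochromatic
  tauto

lemma degenSet_setOf_seesMonochromatic (h : QuadrangleWithoutPentagon col v₁ v₂ v₃ v₄)
    (hne : ∃ x ∉ ({v₁, v₂, v₃, v₄} : Set V), SeesMonochromatic col v₁ v₂ v₃ v₄ x) :
    DegenSet col {x | x ∉ ({v₁, v₂, v₃, v₄} : Set V) ∧ SeesMonochromatic col v₁ v₂ v₃ v₄ x} := by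
  refine ⟨hne, fun x => col v₁ x, fun a ⟨ha, hma⟩ b ⟨hb, hmb⟩ hab =>
    h.col_eq_or_col_eq_of_seesMonochromatic ha hb hab hma hmb, fun a ⟨ha, hma⟩ y hy => ?_⟩
  by_cases hyQ : y ∈ ({v₁, v₂, v₃, v₄} : Set V)
  · simp only [Set.mem_insert_iff, Set.mem_singleton_iff] at hyQ
    rw [h.symm a y]
    obtain rfl | rfl | rfl | rfl := hyQ <;> grind [SeesMonochromatic]
  rcases h.seesForward_or_seesBackward_or_seesMonochromatic hyQ with hfy | hby | hmy
  · exact h.col_eq_of_seesMonochromatic_of_seesForward ha hyQ hma hfy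
  · rw [← quadrangle_set_reverse] at ha hyQ
    exact h.reverse.col_eq_of_seesMonochromatic_of_seesForward ha hyQ
      (seesMonochromatic_reverse_iff.2 hma) hby
  · exact absurd ⟨hyQ, hmy⟩ hy

lemma degenSet_of_forall_seesForward (h : QuadrangleWithoutPentagon col v₁ v₂ v₃ v₄)
    (hu : u ∉ ({v₁, v₂, v₃, v₄} : Set V)) (hw : w ∉ ({v₁, v₂, v₃, v₄} : Set V)) (huw : u ≠ w)
    (hall : ∀ x ∉ ({v₁, v₂, v₃, v₄} : Set V), SeesForward col v₁ v₂ v₃ v₄ x) :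
    DegenSet col {v₁, v₂, v₃, v₄} := by
  have hdiag := h.diagonals_of_seesForward hu hw huw (hall u hu) (hall w hw)
  obtain ⟨⟨_, _, _, _, _, _, _, _, _, _⟩, hsym, -, -⟩ := h
  classical
  refine ⟨⟨v₁, by simp⟩, fun z => if z = v₁ then col v₁ v₂ else if z = v₂ then col v₂ v₃
    else if z = v₃ then col v₃ v₄ else col v₄ v₁, fun a ha b hb hab => ?_, fun a ha y hy => ?_⟩
  · simp only [Set.mem_insert_iff, Set.mem_singleton_iff] at ha hb
    obtain rfl | rfl | rfl | rfl := ha <;> obtain rfl | rfl | rfl | rfl := hb <;> grind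
  · simp only [Set.mem_insert_iff, Set.mem_singleton_iff] at ha
    have := hall y hy
    simp only [Set.mem_insert_iff, Set.mem_singleton_iff, not_or] at hy
    obtain rfl | rfl | rfl | rfl := ha <;> grind [SeesForward]

lemma exists_degenSet_of_seesForward (h : QuadrangleWithoutPentagon col v₁ v₂ v₃ v₄)
    (hu : u ∉ ({v₁, v₂, v₃, v₄} : Set V)) (hw : w ∉ ({v₁, v₂, v₃, v₄} : Set V)) (huw : u ≠ w)
    (hfu : SeesForward col v₁ v₂ v₃ v₄ u) : ∃ S, DegenSet col S := by
  by_cases hmono : ∃ x ∉ ({v₁, v₂, v₃, v₄} : Set V), SeesMonochromatic col v₁ v₂ v₃ v₄ x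
  · exact ⟨_, h.degenSet_setOf_seesMonochromatic hmono⟩
  refine ⟨_, h.degenSet_of_forall_seesForward hu hw huw fun x hx => ?_⟩
  rcases h.seesForward_or_seesBackward_or_seesMonochromatic hx with hfx | hbx | hmx
  · exact hfx
  · exact absurd ⟨hfu, hbx⟩ (h.not_seesForward_and_seesBackward hu hx)
  · exact absurd ⟨x, hx, hmx⟩ hmono

end QuadrangleWithoutPentagon

/-- In a non-degenerate edge-colored $K_n$ ($n ≥ 6$) with no monochromatic
triangle, every vertex lying on a PC quadrangle also lies on a PC pentagon. -/
theorem pc_pentagon_of_pc_quadrangle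
    (n : ℕ) (hn : 6 ≤ n) (col : Fin n → Fin n → ℕ)
    (hsym : ∀ u v, col u v = col v u)
    (hmono : ¬ HasMonoTriangle col)
    (hnondeg : ¬ ∃ S : Set (Fin n), DegenSet col S) :
    ∀ v : Fin n, PCThrough col 4 v → PCThrough col 5 v := by
  intro v hv4
  by_contra hv5
  obtain ⟨v₂, v₃, v₄, hq⟩ := exists_isPCQuadrangle_of_pcThrough_four hv4
  have h : QuadrangleWithoutPentagon col v v₂ v₃ v₄ := ⟨hq, hsym, hmono, hv5⟩
  obtain ⟨u, hu, w, hw, huw⟩ :=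
    exists_pair_notMem_of_six_le_card (by rwa [Fintype.card_fin]) v v₂ v₃ v₄
  apply hnondeg
  rcases h.seesForward_or_seesBackward_or_seesMonochromatic hu with hfu | hbu | hmu
  · exact h.exists_degenSet_of_seesForward hu hw huw hfu
  · rw [← quadrangle_set_reverse] at hu hw
    exact h.reverse.exists_degenSet_of_seesForward hu hw huw hbu
  · exact ⟨_, h.degenSet_setOf_seesMonochromatic ⟨u, hu, hmu⟩⟩
end
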